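/- Let R be a commutative coherent ring such that every exact complex of FP-injective R-modules has all of its cycles Ding injective. Then R is noetherian (equivalently, every direct sum of injective R-modules is injective). -/

import Mathlib

/-!
Definitions for formalizing "Acyclic complexes and Gorenstein rings"
(Estrada, Iacob, Zolt).
-/

open CategoryTheory Opposite

universe u
noncomputable section
namespace AcyclicGorenstein

/-! ### Complexes of modules -/

section Complexes
variable (T : Type u) [Ring T]

/-- Unbounded chain complexes of left `T`-modules. -/
abbrev Cx := ChainComplex (ModuleCat.{u} T) ℤ

/-- A complex is exact (acyclic) if it has zero homology in every degree. -/
def IsExactCx (C : Cx T) : Prop := ∀ n : ℤ, Function.Exact (C.d (n+1) n) (C.d n (n-1))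

/-- The `n`-th cycle module `Z_n C = ker (d : C_n → C_{n-1})` of a complex. -/
def cycleMod (C : Cx T) (n : ℤ) : ModuleCat.{u} T :=
  ModuleCat.of T (LinearMap.ker (C.d n (n-1)).hom)

/-- `M` is (isomorphic to) a cycle of the complex `C`. -/
def IsCycleOf (C : Cx T) (M : ModuleCat.{u} T) : Prop :=
  ∃ n : ℤ, Nonempty (M ≃ₗ[T] LinearMap.ker (C.d n (n-1)).hom)

/-- All cycles of `C` belong to the class `P`. -/
def cyclesIn (P : ModuleCat.{u} T → Prop) (C : Cx T) : Prop := ∀ n : ℤ, P (cycleMod T C n)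

/-- All components of `C` belong to the class `P`, i.e. `C ∈ dw(P)`. -/
def dwIn (P : ModuleCat.{u} T → Prop) (C : Cx T) : Prop := ∀ n : ℤ, P (C.X n)

/-- A chain map is null-homotopic. -/
def NullHomotopic {V W : Cx T} (f : V ⟶ W) : Prop := Nonempty (Homotopy f 0)

/-- Exactness of the complex `Hom(E, C)`: every map `E → Z_n C` lifts along `d`. -/
def homIntoExact (E : ModuleCat.{u} T) (C : Cx T) : Prop :=
  ∀ (n : ℤ) (f : E →ₗ[T] C.X n), (C.d n (n-1)).hom ∘ₗ f = 0 →
    ∃ g : E →ₗ[T] C.X (n+1), (C.d (n+1) n).hom ∘ₗ g = f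

/-- Exactness of the complex `Hom(C, Q)`. -/
def homOutExact (C : Cx T) (Q : ModuleCat.{u} T) : Prop :=
  ∀ (n : ℤ) (f : C.X n →ₗ[T] Q), f ∘ₗ (C.d (n+1) n).hom = 0 →
    ∃ g : C.X (n-1) →ₗ[T] Q, g ∘ₗ (C.d n (n-1)).hom = f

end Complexes

/-! ### Ext, orthogonal classes, cotorsion pairs -/

section Ext
variable (T : Type u) [Ring T]

/-- Vanishing of `Ext^n_T(A, B)` (Ext in the abelian category of `T`-modules). -/
def extVanish (n : ℕ) (A B : ModuleCat.{u} T) : Prop :=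
  Subsingleton (((Ext ℤ (ModuleCat.{u} T) n).obj (op A)).obj B)

/-- The right `Ext^1`-orthogonal class `A^⊥`. -/
def rightOrth (A : ModuleCat.{u} T → Prop) : ModuleCat.{u} T → Prop :=
  fun M => ∀ X, A X → extVanish T 1 X M

/-- The left `Ext^1`-orthogonal class `^⊥B`. -/
def leftOrth (B : ModuleCat.{u} T → Prop) : ModuleCat.{u} T → Prop :=
  fun M => ∀ Y, B Y → extVanish T 1 M Y

/-- `(A, B)` is a cotorsion pair: `B = A^⊥` and `A = ^⊥B`. -/
def IsCotorsionPair (A B : ModuleCat.{u} T → Prop) : Prop :=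
  (∀ M, B M ↔ rightOrth T A M) ∧ (∀ M, A M ↔ leftOrth T B M)

/-- A hereditary pair: `Ext^i(A, B) = 0` for all `A ∈ A`, `B ∈ B`, `i ≥ 1`. -/
def HereditaryPair (A B : ModuleCat.{u} T → Prop) : Prop :=
  ∀ i : ℕ, 1 ≤ i → ∀ X Y, A X → B Y → extVanish T i X Y

/-- A short exact sequence `0 → M₁ → M₂ → M₃ → 0` presented by linear maps. -/
def IsSES {M₁ M₂ M₃ : ModuleCat.{u} T} (i : M₁ →ₗ[T] M₂) (p : M₂ →ₗ[T] M₃) : Prop :=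
  Function.Injective i ∧ Function.Surjective p ∧ Function.Exact i p

/-- Completeness of a cotorsion pair: every module has special approximations on both sides. -/
def CompletePair (A B : ModuleCat.{u} T → Prop) : Prop :=
  ∀ M : ModuleCat.{u} T,
    (∃ (B' A' : ModuleCat.{u} T) (i : M →ₗ[T] B') (p : B' →ₗ[T] A'),
        B B' ∧ A A' ∧ IsSES T i p) ∧
    (∃ (B' A' : ModuleCat.{u} T) (i : B' →ₗ[T] A') (p : A' →ₗ[T] M),
        B B' ∧ A A' ∧ IsSES T i p)

/-- dg-condition for a complex `W` with components in `P`, tested against chain maps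
into `W` from exact complexes with cycles in `Ort`. -/
def dgInto (P Ort : ModuleCat.{u} T → Prop) (W : Cx T) : Prop :=
  dwIn T P W ∧ ∀ V : Cx T, IsExactCx T V → cyclesIn T Ort V →
    ∀ f : V ⟶ W, NullHomotopic T f

/-- dg-condition for a complex `Y` with components in `P`, tested against chain maps
from `Y` to exact complexes with cycles in `Ort`. -/
def dgOut (P Ort : ModuleCat.{u} T → Prop) (Y : Cx T) : Prop :=
  dwIn T P Y ∧ ∀ U : Cx T, IsExactCx T U → cyclesIn T Ort U →
    ∀ f : Y ⟶ U, NullHomotopic T f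

end Ext

/-! ### Classes of modules defined by complexes of injectives/projectives -/

section Classes
variable (T : Type u) [Ring T]

/-- An FP-injective (absolutely pure) module: `Ext^1(F, A) = 0` for every finitely
presented `F`. -/
def FPInj (A : ModuleCat.{u} T) : Prop :=
  ∀ F : ModuleCat.{u} T, Module.FinitePresentation T F → extVanish T 1 F A

/-- A module of type `FP∞`: it has a projective resolution by finitely generated
(projective) modules. -/
def TypeFPInfty (F : ModuleCat.{u} T) : Prop :=
  ∃ (P : ℕ → ModuleCat.{u} T) (d : ∀ i, P (i+1) →ₗ[T] P i) (ε : P 0 →ₗ[T] F),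
    (∀ i, Module.Finite T (P i)) ∧ (∀ i, Projective (P i)) ∧
    Function.Surjective ε ∧ Function.Exact (d 0) ε ∧
    ∀ i, Function.Exact (d (i+1)) (d i)

/-- An absolutely clean module: `Ext^1(F, A) = 0` for every module `F` of type `FP∞`. -/
def AbsClean (A : ModuleCat.{u} T) : Prop :=
  ∀ F : ModuleCat.{u} T, TypeFPInfty T F → extVanish T 1 F A

/-- A totally acyclic complex of injectives: an exact complex of injective modules that
stays exact under `Hom(E, -)` for every injective `E`. -/
def TotAcyclicInjCx (C : Cx T) : Prop :=
  dwIn T (fun M => Injective M) C ∧ IsExactCx T C ∧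
    ∀ E : ModuleCat.{u} T, Injective E → homIntoExact T E C

/-- A Gorenstein injective module: a cycle of a totally acyclic complex of injectives. -/
def GorInj (M : ModuleCat.{u} T) : Prop :=
  ∃ C : Cx T, TotAcyclicInjCx T C ∧ IsCycleOf T C M

/-- An exact complex of injectives remaining exact under `Hom(A, -)` for all
FP-injective `A`. -/
def DingInjCx (C : Cx T) : Prop :=
  dwIn T (fun M => Injective M) C ∧ IsExactCx T C ∧
    ∀ A : ModuleCat.{u} T, FPInj T A → homIntoExact T A C

/-- A Ding injective module. -/
def DingInj (M : ModuleCat.{u} T) : Prop :=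
  ∃ C : Cx T, DingInjCx T C ∧ IsCycleOf T C M

/-- An exact complex of injectives remaining exact under `Hom(A, -)` for all
absolutely clean `A`. -/
def GorACInjCx (C : Cx T) : Prop :=
  dwIn T (fun M => Injective M) C ∧ IsExactCx T C ∧
    ∀ A : ModuleCat.{u} T, AbsClean T A → homIntoExact T A C

/-- A Gorenstein AC-injective module. -/
def GorACInj (M : ModuleCat.{u} T) : Prop :=
  ∃ C : Cx T, GorACInjCx T C ∧ IsCycleOf T C M

/-- A totally acyclic complex of projectives: an exact complex of projective modules that
stays exact under `Hom(-, Q)` for every projective `Q`. -/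
def TotAcyclicProjCx (C : Cx T) : Prop :=
  dwIn T (fun M => Projective M) C ∧ IsExactCx T C ∧
    ∀ Q : ModuleCat.{u} T, Projective Q → homOutExact T C Q

/-- A (possibly infinite) exact left resolution of `M` by modules in the class `P`:
`⋯ → D_1 → D_0 → M → 0`. -/
def ExactLeftRes (P : ModuleCat.{u} T → Prop) (M : ModuleCat.{u} T) : Prop :=
  ∃ (D : ℕ → ModuleCat.{u} T) (d : ∀ i, D (i+1) →ₗ[T] D i) (ε : D 0 →ₗ[T] M),
    (∀ i, P (D i)) ∧ Function.Surjective ε ∧ Function.Exact (d 0) ε ∧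
    ∀ i, Function.Exact (d (i+1)) (d i)

/-- Left resolution dimension at most `n` by modules in the class `P`: there is an exact
sequence `0 → D_n → ⋯ → D_0 → M → 0` with all `D_i ∈ P`. -/
def ResDimLe (P : ModuleCat.{u} T → Prop) (M : ModuleCat.{u} T) (n : ℕ) : Prop :=
  ∃ (D : ℕ → ModuleCat.{u} T) (d : ∀ i, D (i+1) →ₗ[T] D i) (ε : D 0 →ₗ[T] M),
    (∀ i, P (D i)) ∧ (∀ i, n < i → Subsingleton (D i)) ∧
    Function.Surjective ε ∧ Function.Exact (d 0) ε ∧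
    ∀ i, Function.Exact (d (i+1)) (d i)

/-- Right resolution (coresolution) dimension at most `n` by modules in the class `P`:
there is an exact sequence `0 → M → D^0 → ⋯ → D^n → 0` with all `D^i ∈ P`. -/
def CoresDimLe (P : ModuleCat.{u} T → Prop) (M : ModuleCat.{u} T) (n : ℕ) : Prop :=
  ∃ (D : ℕ → ModuleCat.{u} T) (ε : M →ₗ[T] D 0) (d : ∀ i, D i →ₗ[T] D (i+1)),
    (∀ i, P (D i)) ∧ (∀ i, n < i → Subsingleton (D i)) ∧
    Function.Injective ε ∧ Function.Exact ε (d 0) ∧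
    ∀ i, Function.Exact (d i) (d (i+1))

/-- Projective dimension at most `n`. -/
def projDimLe (M : ModuleCat.{u} T) (n : ℕ) : Prop :=
  ResDimLe T (fun Q => Projective Q) M n

/-- Injective dimension at most `n`. -/
def injDimLe (M : ModuleCat.{u} T) (n : ℕ) : Prop :=
  CoresDimLe T (fun E => Injective E) M n

end Classes

/-! ### Tensor products over a (noncommutative) ring, flatness, character modules -/

section Tensor
variable (S : Type u) [Ring S]
variable (M : Type u) [AddCommGroup M] [Module Sᵐᵒᵖ M] (N : Type u) [AddCommGroup N] [Module S N]

/-- Defining relations of the balanced tensor product `M ⊗_S N` of a right `S`-module `M`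
and a left `S`-module `N`. -/
def trel : Set (TensorProduct ℤ M N) :=
  {x | ∃ (r : S) (m : M) (n : N), x = (MulOpposite.op r • m) ⊗ₜ[ℤ] n - m ⊗ₜ[ℤ] (r • n)}

/-- The balanced tensor product `M ⊗_S N` of a right `S`-module and a left `S`-module. -/
def Tens : Type u := TensorProduct ℤ M N ⧸ Submodule.span ℤ (trel S M N)

instance : AddCommGroup (Tens S M N) :=
  inferInstanceAs (AddCommGroup (TensorProduct ℤ M N ⧸ Submodule.span ℤ (trel S M N)))

variable {S M N}
variable {M' : Type u} [AddCommGroup M'] [Module Sᵐᵒᵖ M']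
variable {N' : Type u} [AddCommGroup N'] [Module S N']

/-- Functoriality of the balanced tensor product in the first variable. -/
def tmapL (f : M →ₗ[Sᵐᵒᵖ] M') (N : Type u) [AddCommGroup N] [Module S N] :
    Tens S M N →ₗ[ℤ] Tens S M' N :=
  Submodule.mapQ _ _ (TensorProduct.map f.toAddMonoidHom.toIntLinearMap LinearMap.id) (by
    rw [Submodule.span_le]
    rintro x ⟨r, m, n, rfl⟩
    refine Submodule.mem_comap.2 (Submodule.subset_span ⟨r, f m, n, ?_⟩)
    erw [map_sub, TensorProduct.map_tmul, TensorProduct.map_tmul]; simp [map_smul])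

/-- Functoriality of the balanced tensor product in the second variable. -/
def tmapR (M : Type u) [AddCommGroup M] [Module Sᵐᵒᵖ M] (g : N →ₗ[S] N') :
    Tens S M N →ₗ[ℤ] Tens S M N' :=
  Submodule.mapQ _ _ (TensorProduct.map LinearMap.id g.toAddMonoidHom.toIntLinearMap) (by
    rw [Submodule.span_le]
    rintro x ⟨r, m, n, rfl⟩
    refine Submodule.mem_comap.2 (Submodule.subset_span ⟨r, m, g n, ?_⟩)
    erw [map_sub, TensorProduct.map_tmul, TensorProduct.map_tmul]; simp [map_smul])

end Tensor

section Char
variable (S : Type u) [Ring S] (M : Type u) [AddCommGroup M]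

/-- The character group `M⁺ = Hom_ℤ(M, ℚ/ℤ)`. -/
def CharMod : Type u := M →+ AddCircle (1 : ℚ)

instance : FunLike (CharMod M) M (AddCircle (1 : ℚ)) where
  coe c := c.toFun
  coe_injective _ _ h := AddMonoidHom.ext (congrFun h)

instance : LinearMapClass (CharMod M) ℤ M (AddCircle (1 : ℚ)) where
  map_add f x y := AddMonoidHom.map_add (M := M) f x y
  map_smulₛₗ f n x := by
    rw [RingHom.id_apply]; exact AddMonoidHom.map_zsmul (f : M →+ AddCircle (1:ℚ)) n x

instance : AddCommGroup (CharMod M) := inferInstanceAs (AddCommGroup (M →+ _))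

variable {M}

lemma CharMod.ext {f g : CharMod M} (h : ∀ m, f m = g m) : f = g := DFunLike.ext _ _ h

variable (M) [Module S M]

/-- The right `S`-action on the character module of a left `S`-module. -/
instance : SMul Sᵐᵒᵖ (CharMod M) :=
  ⟨fun s f => (f : M →+ AddCircle (1:ℚ)).comp (DistribMulAction.toAddMonoidHom M s.unop)⟩

variable {M}

lemma charSmul_apply (s : Sᵐᵒᵖ) (f : CharMod M) (m : M) :
    (s • f : CharMod M) m = f (s.unop • m) := rfl

instance : Module Sᵐᵒᵖ (CharMod M) where
  one_smul f := CharMod.ext fun m => by rw [charSmul_apply]; simp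
  mul_smul x y f := CharMod.ext fun m => by
    simp only [charSmul_apply, MulOpposite.unop_mul, mul_smul]
  smul_zero s := rfl
  smul_add s f g := rfl
  add_smul x y f := CharMod.ext fun m => by
    show f ((x + y).unop • m) = (x • f) m + (y • f) m
    rw [MulOpposite.unop_add, add_smul, map_add]; rfl
  zero_smul f := CharMod.ext fun m => by
    show f ((0 : Sᵐᵒᵖ).unop • m) = (0 : CharMod M) m
    simp only [MulOpposite.unop_zero, zero_smul]
    show f 0 = (0 : M →+ AddCircle (1:ℚ)) m
    simp

/-- The character module `M⁺` of a left `S`-module, as a right `S`-module. -/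
def charM (A : ModuleCat.{u} S) : ModuleCat.{u} Sᵐᵒᵖ := ModuleCat.of Sᵐᵒᵖ (CharMod A)

end Char

/-! ### F-total acyclicity, flat / Gorenstein flat / PGF modules (both sides) -/

section Sides
variable (S : Type u) [Ring S]

/-- Exactness of `C ⊗_S N` for a complex `C` of right `S`-modules and `N` a left
`S`-module. -/
def tensExactR (C : Cx Sᵐᵒᵖ) (N : ModuleCat.{u} S) : Prop :=
  ∀ n : ℤ, Function.Exact (tmapL (C.d (n+1) n).hom N) (tmapL (C.d n (n-1)).hom N)

/-- Exactness of `M ⊗_S C` for a right `S`-module `M` and a complex `C` of left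
`S`-modules. -/
def tensExactL (M : ModuleCat.{u} Sᵐᵒᵖ) (C : Cx S) : Prop :=
  ∀ n : ℤ, Function.Exact (tmapR M (C.d (n+1) n).hom) (tmapR M (C.d n (n-1)).hom)

/-- A flat right `S`-module: tensoring with it preserves injections of left modules. -/
def FlatRight (M : ModuleCat.{u} Sᵐᵒᵖ) : Prop :=
  ∀ (N N' : ModuleCat.{u} S) (g : N →ₗ[S] N'),
    Function.Injective g → Function.Injective (tmapR M g)

/-- A flat left `S`-module: tensoring with it preserves injections of right modules. -/
def FlatLeft (N : ModuleCat.{u} S) : Prop :=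
  ∀ (M M' : ModuleCat.{u} Sᵐᵒᵖ) (f : M →ₗ[Sᵐᵒᵖ] M'),
    Function.Injective f → Function.Injective (tmapL f N)

/-- An F-totally acyclic complex of right `S`-modules: exact, and `C ⊗ I` is exact for
every injective left `S`-module `I`. -/
def FTotAcyclicR (C : Cx Sᵐᵒᵖ) : Prop :=
  IsExactCx Sᵐᵒᵖ C ∧ ∀ I : ModuleCat.{u} S, Injective I → tensExactR S C I

/-- An F-totally acyclic complex of left `S`-modules: exact, and `I ⊗ C` is exact for
every injective right `S`-module `I`. -/
def FTotAcyclicL (C : Cx S) : Prop :=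
  IsExactCx S C ∧ ∀ I : ModuleCat.{u} Sᵐᵒᵖ, Injective I → tensExactL S I C

/-- A Gorenstein flat right `S`-module: a cycle of an F-totally acyclic complex of flat
right modules. -/
def GFlatR (M : ModuleCat.{u} Sᵐᵒᵖ) : Prop :=
  ∃ C : Cx Sᵐᵒᵖ, dwIn Sᵐᵒᵖ (FlatRight S) C ∧ FTotAcyclicR S C ∧ IsCycleOf Sᵐᵒᵖ C M

/-- A Gorenstein flat left `S`-module. -/
def GFlatL (M : ModuleCat.{u} S) : Prop :=
  ∃ C : Cx S, dwIn S (FlatLeft S) C ∧ FTotAcyclicL S C ∧ IsCycleOf S C M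

/-- A Gorenstein cotorsion right `S`-module: `Ext^1(G, -)` vanishes on it for every
Gorenstein flat `G`. -/
def GorCotR (Y : ModuleCat.{u} Sᵐᵒᵖ) : Prop :=
  ∀ G : ModuleCat.{u} Sᵐᵒᵖ, GFlatR S G → extVanish Sᵐᵒᵖ 1 G Y

/-- A Gorenstein cotorsion left `S`-module. -/
def GorCotL (Y : ModuleCat.{u} S) : Prop :=
  ∀ G : ModuleCat.{u} S, GFlatL S G → extVanish S 1 G Y

/-- An exact complex of projective left modules which stays exact when tensored with any
injective right module. -/
def PGFCxL (C : Cx S) : Prop :=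
  dwIn S (fun Q => Projective Q) C ∧ IsExactCx S C ∧
    ∀ I : ModuleCat.{u} Sᵐᵒᵖ, Injective I → tensExactL S I C

/-- A projectively coresolved Gorenstein flat left `S`-module. -/
def PGFL (M : ModuleCat.{u} S) : Prop := ∃ C : Cx S, PGFCxL S C ∧ IsCycleOf S C M

/-- An exact complex of projective right modules which stays exact when tensored with any
injective left module. -/
def PGFCxR (C : Cx Sᵐᵒᵖ) : Prop :=
  dwIn Sᵐᵒᵖ (fun Q => Projective Q) C ∧ IsExactCx Sᵐᵒᵖ C ∧
    ∀ I : ModuleCat.{u} S, Injective I → tensExactR S C I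

/-- A projectively coresolved Gorenstein flat right `S`-module. -/
def PGFR (M : ModuleCat.{u} Sᵐᵒᵖ) : Prop := ∃ C : Cx Sᵐᵒᵖ, PGFCxR S C ∧ IsCycleOf Sᵐᵒᵖ C M

/-- `S` is a coherent ring: finitely generated one-sided ideals (on either side) are
finitely presented. -/
def IsCoherentRing : Prop :=
  (∀ I : Submodule S S, I.FG → Module.FinitePresentation S I) ∧
  (∀ I : Submodule Sᵐᵒᵖ Sᵐᵒᵖ, I.FG → Module.FinitePresentation Sᵐᵒᵖ I)

/-- `S` is left `n`-perfect: every flat left `S`-module has projective dimension ≤ `n`. -/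
def LeftNPerfect (n : ℕ) : Prop :=
  ∀ M : ModuleCat.{u} S, FlatLeft S M → projDimLe S M n

/-- `S` is an Iwanaga–Gorenstein ring: two-sided noetherian with finite self-injective
dimension on both sides. -/
def IwanagaGorenstein : Prop :=
  IsNoetherianRing S ∧ IsNoetherianRing Sᵐᵒᵖ ∧
  (∃ n : ℕ, injDimLe S (ModuleCat.of S S) n) ∧
  (∃ n : ℕ, injDimLe Sᵐᵒᵖ (ModuleCat.of Sᵐᵒᵖ Sᵐᵒᵖ) n)

end Sides

/-! ### The commutative case -/

section Comm
variable (R : Type u) [CommRing R]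

/-- For a commutative ring: exactness of `I ⊗_R C`. -/
def tensExactC (I : ModuleCat.{u} R) (C : Cx R) : Prop :=
  ∀ n : ℤ, Function.Exact
    (LinearMap.lTensor (R := R) (M := I) (C.d (n+1) n).hom)
    (LinearMap.lTensor (R := R) (M := I) (C.d n (n-1)).hom)

/-- An F-totally acyclic complex over a commutative ring: exact, and `I ⊗_R C` is exact
for every injective module `I`. -/
def FTotAcyclicC (C : Cx R) : Prop :=
  IsExactCx R C ∧ ∀ I : ModuleCat.{u} R, Injective I → tensExactC R I C

/-- A Gorenstein flat module over a commutative ring. -/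
def GFlatC (M : ModuleCat.{u} R) : Prop :=
  ∃ C : Cx R, dwIn R (fun F => Module.Flat R F) C ∧ FTotAcyclicC R C ∧ IsCycleOf R C M

/-- A Gorenstein cotorsion module over a commutative ring. -/
def GorCotC (Y : ModuleCat.{u} R) : Prop :=
  ∀ G : ModuleCat.{u} R, GFlatC R G → extVanish R 1 G Y

/-- An exact complex of projectives over a commutative ring which stays exact when
tensored with any injective module. -/
def PGFCxC (C : Cx R) : Prop :=
  dwIn R (fun Q => Projective Q) C ∧ IsExactCx R C ∧
    ∀ I : ModuleCat.{u} R, Injective I → tensExactC R I C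

/-- A projectively coresolved Gorenstein flat module over a commutative ring. -/
def PGFC (M : ModuleCat.{u} R) : Prop := ∃ C : Cx R, PGFCxC R C ∧ IsCycleOf R C M

/-- The character module `M⁺` over a commutative ring, as an `R`-module. -/
def charC (M : ModuleCat.{u} R) : ModuleCat.{u} R := ModuleCat.of R (CharacterModule M)

/-- A coherent commutative ring: every finitely generated ideal is finitely presented. -/
def IsCoherentCommRing : Prop := ∀ I : Ideal R, I.FG → Module.FinitePresentation R I

/-- A commutative noetherian ring is Gorenstein if its self-injective dimension is
finite. -/
def GorensteinCommRing : Prop :=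
  IsNoetherianRing R ∧ ∃ n : ℕ, injDimLe R (ModuleCat.of R R) n

end Comm

end AcyclicGorenstein

end

open AcyclicGorenstein

/-!
An infinite direct sum `T = ⨁ Eₙ` of injective modules (here: eventually zero sequences) is
FP-injective, because a finitely generated submodule only reaches finitely many summands and
`Ext¹(Rⁿ ⧸ K, T)` vanishes as soon as maps `K → T` extend to `Rⁿ`. The two-periodic complex
`⋯ → T --𝟙--> T --0--> T --𝟙--> ⋯` is exact with FP-injective components, so `T` is Ding
injective. An FP-injective module `M` which is a cycle of a Ding complex `D` is injective: its
inclusion into `Dₘ` lifts to `Dₘ₊₁`, exhibiting `M` as a retract of an injective module.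
Finally, for an ascending chain of ideals `cₙ` with union `I`, take `Eₙ ⊇ R ⧸ cₙ`; the map
`I → T`, `x ↦ (x mod cₙ)ₙ` extends to `R`, and the finite support of the image of `1` bounds
the chain.
-/

section ExtensionProperty

variable {R : Type*} [Ring R]

def Submodule.ExtensionProperty {M : Type*} [AddCommGroup M] [Module R M] (K : Submodule R M)
    (B : Type*) [AddCommGroup B] [Module R B] : Prop :=
  ∀ ψ : K →ₗ[R] B, ∃ Ψ : M →ₗ[R] B, Ψ ∘ₗ K.subtype = ψ

variable {B : Type*} [AddCommGroup B] [Module R B]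

theorem extensionProperty_ker_of_projective {P Q F : Type*}
    [AddCommGroup P] [Module R P] [Module.Projective R P]
    [AddCommGroup Q] [Module R Q] [Module.Projective R Q] [AddCommGroup F] [Module R F]
    {ε : P →ₗ[R] F} {π : Q →ₗ[R] F} (hε : Function.Surjective ε) (hπ : Function.Surjective π)
    (hQ : (LinearMap.ker π).ExtensionProperty B) : (LinearMap.ker ε).ExtensionProperty B := by
  intro ψ
  obtain ⟨α, hα⟩ := Module.projective_lifting_property π ε hπ
  obtain ⟨β, hβ⟩ := Module.projective_lifting_property ε π hε
  have hβker : ∀ y ∈ LinearMap.ker π, β y ∈ LinearMap.ker ε := fun y hy => by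
    simpa [← hβ] using hy
  have hαker : ∀ x ∈ LinearMap.ker ε, α x ∈ LinearMap.ker π := fun x hx => by
    simpa [← hα] using hx
  obtain ⟨χ, hχ⟩ := hQ (ψ ∘ₗ β.restrict hβker)
  -- `x = (x - β (α x)) + β (α x)` with both summands in `ker ε`; `χ` takes care of the second.
  let γ : P →ₗ[R] LinearMap.ker ε := (LinearMap.id - β ∘ₗ α).codRestrict _ fun x => by
    simp [← LinearMap.comp_apply ε β, hβ, ← LinearMap.comp_apply π α, hα]
  refine ⟨ψ ∘ₗ γ + χ ∘ₗ α, LinearMap.ext fun x => ?_⟩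
  have hχx : χ (α x) = ψ ⟨β (α x), hβker _ (hαker x x.2)⟩ :=
    LinearMap.congr_fun hχ ⟨α x, hαker x x.2⟩
  simp only [LinearMap.add_apply, LinearMap.comp_apply, Submodule.subtype_apply, hχx, ← map_add]
  congr 1
  ext
  simp [γ]

theorem Function.Exact.exists_comp_eq_of_extensionProperty_ker {P₂ P₁ P₀ F : Type*}
    [AddCommGroup P₂] [Module R P₂] [AddCommGroup P₁] [Module R P₁]
    [AddCommGroup P₀] [Module R P₀] [AddCommGroup F] [Module R F]
    {d₂ : P₂ →ₗ[R] P₁} {d₁ : P₁ →ₗ[R] P₀} {ε : P₀ →ₗ[R] F}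
    (h₂ : Function.Exact d₂ d₁) (h₁ : Function.Exact d₁ ε)
    (hε : (LinearMap.ker ε).ExtensionProperty B) (φ : P₁ →ₗ[R] B) (hφ : φ ∘ₗ d₂ = 0) :
    ∃ Ψ : P₀ →ₗ[R] B, Ψ ∘ₗ d₁ = φ := by
  let d₁' : P₁ →ₗ[R] LinearMap.ker ε := d₁.codRestrict _ h₁.apply_apply_eq_zero
  have hd₁' : Function.Surjective d₁' := by
    rintro ⟨y, hy⟩
    obtain ⟨x, rfl⟩ := (h₁ y).mp hy
    exact ⟨x, rfl⟩
  have hex : Function.Exact d₂ d₁' := fun x => by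
    rw [← h₂ x, Subtype.ext_iff]
    rfl
  obtain ⟨Ψ, hΨ⟩ := hε <| (LinearMap.range d₂).liftQ φ (LinearMap.range_le_ker_iff.mpr hφ) ∘ₗ
    (hex.linearEquivOfSurjective hd₁').symm.toLinearMap
  exact ⟨Ψ, LinearMap.ext fun x => (LinearMap.congr_fun hΨ (d₁' x)).trans (by simp)⟩

end ExtensionProperty

theorem extVanish_one_of_extensionProperty_ker {R : Type u} [Ring R] {F B : ModuleCat.{u} R}
    (h : ∀ (P : ModuleCat.{u} R) [Module.Projective R P] (ε : P →ₗ[R] F),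
      Function.Surjective ε → (LinearMap.ker ε).ExtensionProperty B) :
    extVanish R 1 F B := by
  let P := ProjectiveResolution.of F
  have hexact : (P.complex.linearYonedaObj ℤ B).ExactAt 1 := by
    rw [HomologicalComplex.exactAt_iff' _ 0 1 2 (by simp) (by simp),
      ShortComplex.moduleCat_exact_iff]
    intro φ hφ
    have hε : Function.Surjective (P.π.f 0).hom :=
      (ModuleCat.epi_iff_surjective _).mp inferInstance
    obtain ⟨Ψ, hΨ⟩ := ((ShortComplex.ShortExact.moduleCat_exact_iff_function_exact _).mp
      (P.exact_succ 0)).exists_comp_eq_of_extensionProperty_ker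
      ((ShortComplex.ShortExact.moduleCat_exact_iff_function_exact _).mp P.exact₀)
      (h _ _ hε) φ.hom (congrArg ModuleCat.Hom.hom hφ)
    exact ⟨ModuleCat.ofHom Ψ, ModuleCat.hom_ext hΨ⟩
  exact ModuleCat.subsingleton_of_isZero
    ((HomologicalComplex.exactAt_iff_isZero_homology _ _).mp hexact |>.of_iso (P.isoExt 1 B))

theorem fpInj_of_extensionProperty_fg {R : Type u} [Ring R] {B : ModuleCat.{u} R}
    (h : ∀ (n : ℕ) (K : Submodule R (Fin n → R)), K.FG → K.ExtensionProperty B) :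
    FPInj R B := by
  intro F _
  obtain ⟨n, π, hπ⟩ := Module.Finite.exists_fin' R F
  refine extVanish_one_of_extensionProperty_ker fun P _ ε hε => ?_
  exact extensionProperty_ker_of_projective hε hπ (h n _ (Module.FinitePresentation.fg_ker π hπ))

section EventuallyZero

open Filter

def eventuallyZero (R : Type*) [Semiring R] (E : ℕ → Type*) [∀ n, AddCommMonoid (E n)]
    [∀ n, Module R (E n)] : Submodule R (∀ n, E n) where
  carrier := {v | ∀ᶠ n in atTop, v n = 0}
  add_mem' ha hb := by filter_upwards [ha, hb] with n h₁ h₂; simp [h₁, h₂]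
  zero_mem' := Eventually.of_forall fun _ => rfl
  smul_mem' r v hv := by filter_upwards [hv] with n h; simp [h]

variable {R : Type*} [Ring R] {E : ℕ → Type v} [∀ n, AddCommGroup (E n)] [∀ n, Module R (E n)]

theorem Submodule.FG.extensionProperty_eventuallyZero [Small.{v} R]
    [∀ n, Module.Injective R (E n)] {M : Type*} [AddCommGroup M] [Module R M]
    {K : Submodule R M} (hK : K.FG) : K.ExtensionProperty (eventuallyZero R E) := by
  intro ψ
  have := Module.Finite.iff_fg.mpr hK
  obtain ⟨k, s, hs⟩ := Module.Finite.exists_fin (R := R) (M := K)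
  let ψ' n : K →ₗ[R] E n := LinearMap.proj n ∘ₗ (eventuallyZero R E).subtype ∘ₗ ψ
  have hψ : ∀ᶠ n in atTop, ψ' n = 0 := by
    filter_upwards [eventually_all.mpr fun i => (ψ (s i)).2] with n hn
    exact LinearMap.ext_on_range hs hn
  obtain ⟨N, hN⟩ := eventually_atTop.mp hψ
  choose Ψ hΨ using fun n =>
    Module.Injective.extension_property R (E n) K M K.subtype K.subtype_injective (ψ' n)
  refine ⟨(LinearMap.pi fun n => if n < N then Ψ n else 0).codRestrict _ fun x => ?_, ?_⟩
  · exact eventually_atTop.mpr ⟨N, fun n hn => by simp [not_lt.mpr hn]⟩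
  · ext x n
    change (if n < N then Ψ n else 0) x = ψ' n x
    split_ifs with hn
    · exact LinearMap.congr_fun (hΨ n) x
    · exact (LinearMap.congr_fun (hN n (not_lt.mp hn)) x).symm

theorem fpInj_eventuallyZero {R : Type u} [Ring R] (E : ℕ → Type u) [∀ n, AddCommGroup (E n)]
    [∀ n, Module R (E n)] [∀ n, Module.Injective R (E n)] :
    FPInj R (ModuleCat.of R (eventuallyZero R E)) :=
  fpInj_of_extensionProperty_fg fun _ _ hK => hK.extensionProperty_eventuallyZero

theorem OrderHom.exists_eq_of_injective_eventuallyZero {R : Type u} [Ring R]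
    (c : ℕ →o Ideal R) {E : ℕ → Type u} [∀ n, AddCommGroup (E n)] [∀ n, Module R (E n)]
    [Module.Injective R (eventuallyZero R E)]
    (ι : ∀ n, R ⧸ c n →ₗ[R] E n) (hι : ∀ n, Function.Injective (ι n)) :
    ∃ N, ∀ m, N ≤ m → c N = c m := by
  let I := ⨆ n, c n
  have hI : ∀ x ∈ I, ∀ᶠ n in atTop, x ∈ c n := fun x hx => by
    obtain ⟨N, hN⟩ := (Submodule.mem_iSup_of_directed _ c.monotone.directed_le).mp hx
    exact eventually_atTop.mpr ⟨N, fun n hn => c.monotone hn hN⟩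
  let φ : I →ₗ[R] eventuallyZero R E :=
    (LinearMap.pi fun n => ι n ∘ₗ (c n).mkQ ∘ₗ I.subtype).codRestrict _ fun x => by
      filter_upwards [hI x x.2] with n hn
      simp [(Submodule.Quotient.mk_eq_zero _).mpr hn]
  obtain ⟨Φ, hΦ⟩ :=
    Module.Injective.extension_property R _ I R I.subtype I.subtype_injective φ
  -- `φ x = x • Φ 1`, so every `x ∈ I` lies in each `c n` at which `Φ 1` vanishes
  obtain ⟨N, hN⟩ := eventually_atTop.mp (Φ 1).2
  have hIc : I ≤ c N := fun x hx => by
    have hφx : φ ⟨x, hx⟩ = x • Φ 1 := by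
      rw [← LinearMap.congr_fun hΦ ⟨x, hx⟩, LinearMap.comp_apply, ← map_smul, smul_eq_mul,
        mul_one, Submodule.subtype_apply]
    have : ι N ((c N).mkQ x) = ι N 0 :=
      (congrArg (fun v : eventuallyZero R E => (v : ∀ n, E n) N) hφx).trans
        (by simp [hN N le_rfl])
    simpa using hι N this
  exact ⟨N, fun m hm => le_antisymm (c.monotone hm) ((le_iSup (fun n => c n) m).trans hIc)⟩

end EventuallyZero

section PeriodicComplex

variable {R : Type u} [Ring R] (T : ModuleCat.{u} R)

def periodicCx : Cx R :=
  ChainComplex.of (fun _ => T) (fun n => if Even n then 𝟙 T else 0) fun n => by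
    rcases Int.even_or_odd n with hn | hn
    · simp [hn, Int.not_even_iff_odd.mpr hn.add_one]
    · simp [Int.not_even_iff_odd.mpr hn]

lemma periodicCx_d (n : ℤ) :
    (periodicCx T).d (n + 1) n = if Even n then 𝟙 T else 0 :=
  ChainComplex.of_d (fun _ => T) (fun n => if Even n then 𝟙 T else 0) n

lemma periodicCx_isExact : IsExactCx R (periodicCx T) := by
  intro n
  obtain ⟨k, rfl⟩ : ∃ k, n = k + 1 := ⟨n - 1, by ring⟩
  rw [add_sub_cancel_right, periodicCx_d, periodicCx_d]
  rcases Int.even_or_odd k with hk | hk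
  · simp only [Int.not_even_iff_odd.mpr hk.add_one, hk, if_true, if_false]
    exact (LinearMap.exact_zero_iff_injective T (LinearMap.id : T →ₗ[R] T)).mpr
      Function.injective_id
  · simp only [Int.not_even_iff_odd.mpr hk, hk.add_one, if_true, if_false]
    exact (LinearMap.exact_zero_iff_surjective T (LinearMap.id : T →ₗ[R] T)).mpr
      Function.surjective_id

def periodicCx.cycleModZeroEquiv : T ≃ₗ[R] cycleMod R (periodicCx T) 0 :=
  have hd : (periodicCx T).d 0 (0 - 1) = 0 := by
    have := periodicCx_d T (-1)
    rw [if_neg (by decide)] at this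
    exact this
  (LinearEquiv.ofTop (LinearMap.ker ((periodicCx T).d 0 (0 - 1)).hom) (by
    rw [hd, ModuleCat.hom_zero, LinearMap.ker_zero])).symm

end PeriodicComplex

theorem AcyclicGorenstein.DingInj.of_linearEquiv {R : Type u} [Ring R] {M N : ModuleCat.{u} R}
    (h : DingInj R N) (e : M ≃ₗ[R] N) : DingInj R M := by
  obtain ⟨C, hC, n, ⟨e'⟩⟩ := h
  exact ⟨C, hC, n, ⟨e.trans e'⟩⟩

theorem injective_of_isCycleOf {R : Type u} [Ring R] {C : Cx R} {M : ModuleCat.{u} R}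
    (hC : dwIn R (fun X => Injective X) C) (hM : IsCycleOf R C M) (hlift : homIntoExact R M C) :
    Injective M := by
  obtain ⟨m, ⟨e⟩⟩ := hM
  obtain ⟨g, hg⟩ := hlift m ((LinearMap.ker (C.d m (m - 1)).hom).subtype ∘ₗ e.toLinearMap)
    (LinearMap.ext fun x => (e x).2)
  -- the differential into degree `m` lands in the cycles `≅ M` and splits the lift `g`
  let r : C.X (m + 1) →ₗ[R] M := e.symm.toLinearMap ∘ₗ
    (C.d (m + 1) m).hom.codRestrict _ fun x => by
      rw [LinearMap.mem_ker, ← LinearMap.comp_apply, ← ModuleCat.hom_comp, C.d_comp_d]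
      rfl
  have : Injective (C.X (m + 1)) := hC (m + 1)
  refine Retract.injective ⟨ModuleCat.ofHom g, ModuleCat.ofHom r, ModuleCat.hom_ext ?_⟩
  ext x
  simpa [r, e.symm_apply_eq, Subtype.ext_iff] using LinearMap.congr_fun hg x

theorem injective_of_dingInj_of_fpInj {R : Type u} [Ring R] {M : ModuleCat.{u} R}
    (hD : DingInj R M) (hF : FPInj R M) : Injective M := by
  obtain ⟨C, ⟨hinj, -, hlift⟩, hM⟩ := hD
  exact injective_of_isCycleOf hinj hM (hlift M hF)

theorem statement_15_general (R : Type u) [CommRing R]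
    (h : ∀ C : Cx R, IsExactCx R C → dwIn R (FPInj R) C → cyclesIn R (DingInj R) C) :
    IsNoetherianRing R := by
  rw [isNoetherianRing_iff, ← monotone_stabilizes_iff_noetherian]
  intro c
  let E n : ModuleCat.{u} R := Injective.under (ModuleCat.of R (R ⧸ c n))
  have hE n : Module.Injective R (E n) :=
    Module.injective_module_of_injective_object R (E n) (inj := Injective.injective_under _)
  let T := ModuleCat.of R (eventuallyZero R fun n => E n)
  have hT : FPInj R T := fpInj_eventuallyZero fun n => E n
  have hDing : DingInj R T := (h _ (periodicCx_isExact T) (fun _ => hT) 0).of_linearEquiv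
    (periodicCx.cycleModZeroEquiv T)
  have := Module.injective_module_of_injective_object R T
    (inj := injective_of_dingInj_of_fpInj hDing hT)
  exact c.exists_eq_of_injective_eventuallyZero
    (fun n => (Injective.ι (ModuleCat.of R (R ⧸ c n))).hom)
    fun n => (ModuleCat.mono_iff_injective _).mp inferInstance

/-- a commutative coherent ring over which every exact complex of
FP-injective modules has all cycles Ding injective is noetherian. -/
theorem statement_15 (R : Type u) [CommRing R] (hcoh : IsCoherentCommRing R)
    (h : ∀ C : Cx R, IsExactCx R C → dwIn R (FPInj R) C → cyclesIn R (DingInj R) C) :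
    IsNoetherianRing R :=
  statement_15_general R h
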